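/- Let 𝒯 be a set of MUL-trees with label sets contained in a finite species set X whose split partition is trivial (consists of the single set X), and suppose |X| > 1 or some tree in 𝒯 has more than one leaf. Then every beaded tree on X that weakly displays every MUL-tree in 𝒯 has a bead at the root. -/

import Mathlib

/-!
Common formal framework for MUL-trees, phylogenetic networks, beaded trees,
duplication trees, weak embeddings and related operations, following
van Iersel, Janssen, Jones, Murakami, Zeh,
"Polynomial-Time Algorithms for Phylogenetic Inference Problems involving
duplication and reticulation".

All graphs are directed multigraphs on natural-number vertices, given by a
finite vertex set, an edge-multiplicity function and a (partial) leaf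
labelling by species (also natural numbers).
-/

open scoped Classical

structure DG where
  verts : Finset ℕ
  mult : ℕ → ℕ → ℕ
  label : ℕ → Option ℕ

namespace DG

/-- An arc is a pair of endpoints together with the index of the parallel copy. -/
abbrev Arc := ℕ × ℕ × ℕ

def Adj (G : DG) (u v : ℕ) : Prop := 0 < G.mult u v

def outDeg (G : DG) (u : ℕ) : ℕ := ∑ v ∈ G.verts, G.mult u v
def inDeg (G : DG) (v : ℕ) : ℕ := ∑ u ∈ G.verts, G.mult u v

/-- `G.Reaches u v` : `u` is an ancestor of `v` (possibly `u = v`). -/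
def Reaches (G : DG) : ℕ → ℕ → Prop := Relation.ReflTransGen G.Adj
/-- `G.SReaches u v` : `u` is a strict ancestor of `v` (in an acyclic graph). -/
def SReaches (G : DG) : ℕ → ℕ → Prop := Relation.TransGen G.Adj
def Acyclic (G : DG) : Prop := ∀ v, ¬ G.SReaches v v

def IsRoot (G : DG) (v : ℕ) : Prop := v ∈ G.verts ∧ G.inDeg v = 0 ∧ G.outDeg v = 1
def IsLeafNode (G : DG) (v : ℕ) : Prop := v ∈ G.verts ∧ G.inDeg v = 1 ∧ G.outDeg v = 0
def IsTreeNode (G : DG) (v : ℕ) : Prop := v ∈ G.verts ∧ G.inDeg v = 1 ∧ G.outDeg v = 2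
def IsRetic (G : DG) (v : ℕ) : Prop := v ∈ G.verts ∧ G.inDeg v = 2 ∧ G.outDeg v = 1
def IsDupNode (G : DG) (v : ℕ) : Prop := v ∈ G.verts ∧ G.inDeg v = 1 ∧ G.outDeg v = 1

/-- The reticulation number: the number of reticulation nodes. -/
def reticNum (G : DG) : ℕ := (G.verts.filter (fun v => G.inDeg v = 2 ∧ G.outDeg v = 1)).card
/-- The duplication number: the number of duplication nodes. -/
def dupNum (G : DG) : ℕ := (G.verts.filter (fun v => G.inDeg v = 1 ∧ G.outDeg v = 1)).card
/-- The number of beads (counted by their bottom nodes). -/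
noncomputable def beadNum (G : DG) : ℕ :=
  (G.verts.filter (fun v => ∃ u ∈ G.verts, G.mult u v = 2)).card

def Supported (G : DG) : Prop := ∀ u v, G.Adj u v → u ∈ G.verts ∧ v ∈ G.verts
/-- Exactly the leaves carry labels. -/
def LabelsOnLeaves (G : DG) : Prop := ∀ v, (∃ x, G.label v = some x) ↔ G.IsLeafNode v

/-- The number of leaves (= labelled nodes). -/
def numLeaves (G : DG) : ℕ := (G.verts.filter (fun v => (G.label v).isSome)).card

/-- A multi-labelled tree (MUL-tree) with labels contained in `X`. -/
structure IsMulTree (X : Finset ℕ) (G : DG) : Prop where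
  root : ∃! r, G.IsRoot r
  nodes : ∀ v ∈ G.verts, G.IsRoot v ∨ G.IsTreeNode v ∨ G.IsLeafNode v
  acyclic : G.Acyclic
  simple : ∀ u v, G.mult u v ≤ 1
  supported : G.Supported
  labels : G.LabelsOnLeaves
  labelsSub : ∀ v x, G.label v = some x → x ∈ X

/-- A rooted binary phylogenetic network on `X` (parallel edges allowed). -/
structure IsNetwork (X : Finset ℕ) (G : DG) : Prop where
  root : ∃! r, G.IsRoot r
  nodes : ∀ v ∈ G.verts, G.IsRoot v ∨ G.IsTreeNode v ∨ G.IsRetic v ∨ G.IsLeafNode v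
  acyclic : G.Acyclic
  supported : G.Supported
  labels : G.LabelsOnLeaves
  labelsSub : ∀ v x, G.label v = some x → x ∈ X
  labelsOnto : ∀ x ∈ X, ∃! v, G.label v = some x

/-- A duplication tree on `X`. -/
structure IsDupTree (X : Finset ℕ) (G : DG) : Prop where
  root : ∃! r, G.IsRoot r
  nodes : ∀ v ∈ G.verts, G.IsRoot v ∨ G.IsTreeNode v ∨ G.IsDupNode v ∨ G.IsLeafNode v
  acyclic : G.Acyclic
  simple : ∀ u v, G.mult u v ≤ 1
  supported : G.Supported
  labels : G.LabelsOnLeaves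
  labelsSub : ∀ v x, G.label v = some x → x ∈ X
  labelsOnto : ∀ x ∈ X, ∃! v, G.label v = some x

/-- A beaded tree: a phylogenetic network in which every reticulation node is
the bottom node of a bead (a pair of parallel edges). -/
def IsBeadedTree (X : Finset ℕ) (G : DG) : Prop :=
  IsNetwork X G ∧ ∀ v ∈ G.verts, G.inDeg v = 2 → ∃ u, G.mult u v = 2

def ArcOK (G : DG) (e : Arc) : Prop := e.2.2 < G.mult e.1 e.2.1

/-- `G.IsWalk p a b` : `p` is a (nonempty) directed path of arcs from `a` to `b`. -/
def IsWalk (G : DG) (p : List Arc) (a b : ℕ) : Prop :=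
  p ≠ [] ∧ (∀ e ∈ p, G.ArcOK e) ∧
  List.Chain' (fun e f : Arc => e.2.1 = f.1) p ∧
  p.head?.map Prod.fst = some a ∧
  p.getLast?.map (fun e => e.2.1) = some b

/-- `v` is a node visited by the walk `p`. -/
def OnWalk (p : List Arc) (v : ℕ) : Prop := ∃ e ∈ p, e.1 = v ∨ e.2.1 = v

/-- A weak embedding of a MUL-tree `T` into a network `N`: nodes map to nodes,
edges map to directed paths and the two paths out of an internal node start
with different out-edges. -/
def WeakEmbedding (T N : DG) (h : ℕ → ℕ) (hE : ℕ → ℕ → List Arc) : Prop :=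
  (∀ v ∈ T.verts, h v ∈ N.verts) ∧
  (∀ v, T.IsLeafNode v → N.IsLeafNode (h v) ∧ N.label (h v) = T.label v) ∧
  (∀ u v, T.Adj u v → N.IsWalk (hE u v) (h u) (h v)) ∧
  (∀ x y y', T.Adj x y → T.Adj x y' → y ≠ y' → (hE x y).head? ≠ (hE x y').head?)

/-- `N.Displays T` : `N` weakly displays `T`. -/
def Displays (N T : DG) : Prop := ∃ h hE, WeakEmbedding T N h hE

/-- `x` is a least common ancestor of `y` and `z`. -/
def IsLCA (G : DG) (x y z : ℕ) : Prop :=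
  G.Reaches x y ∧ G.Reaches x z ∧
  ∀ w, G.SReaches x w → ¬ (G.Reaches w y ∧ G.Reaches w z)

/-- A duplication mapping from a MUL-tree `T` to a duplication tree `D`. -/
def DupMapping (T D : DG) (M : ℕ → ℕ) : Prop :=
  (∀ v, T.IsLeafNode v → D.IsLeafNode (M v) ∧ D.label (M v) = T.label v) ∧
  (∀ u v, T.Adj u v → D.SReaches (M u) (M v)) ∧
  (∀ u v v', T.Adj u v → T.Adj u v' → v ≠ v' →
    D.IsLCA (M u) (M v) (M v') ∨ D.IsDupNode (M u))

/-- `D.ConsistentWith T` : there is a duplication mapping from `T` to `D`. -/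
def ConsistentWith (D T : DG) : Prop := ∃ M, DupMapping T D M

/-- A solution to Beaded Tree on `𝒯`: a beaded tree on `X` weakly displaying
every MUL-tree of `𝒯`. -/
def Solution (X : Finset ℕ) (Ts : Set DG) (B : DG) : Prop :=
  IsBeadedTree X B ∧ ∀ T ∈ Ts, B.Displays T

/-- An optimal solution: minimum reticulation number among all solutions. -/
def OptSolution (X : Finset ℕ) (Ts : Set DG) (B : DG) : Prop :=
  Solution X Ts B ∧ ∀ B', Solution X Ts B' → B.reticNum ≤ B'.reticNum

/-- Number of beads traversed by a walk. -/
def beadsOnWalk (G : DG) (p : List Arc) : ℕ :=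
  p.countP (fun e => decide (G.mult e.1 e.2.1 = 2))

/-- Number of duplication nodes traversed by a walk (as arc sources). -/
def dupsOnWalk (G : DG) (p : List Arc) : ℕ :=
  p.countP (fun e => decide (G.inDeg e.1 = 1 ∧ G.outDeg e.1 = 1))

/-- The bead depth: the maximum number of beads on any directed path. -/
noncomputable def beadDepth (G : DG) : ℕ :=
  sSup {n | ∃ p a b, G.IsWalk p a b ∧ G.beadsOnWalk p = n}

/-- A solution to Beaded Tree Depth of minimum bead depth. -/
def DepthOptSolution (X : Finset ℕ) (Ts : Set DG) (B : DG) : Prop :=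
  Solution X Ts B ∧ ∀ B', Solution X Ts B' → B.beadDepth ≤ B'.beadDepth

/-- The child of the root is the top node of a bead. -/
def HasBeadAtRoot (G : DG) : Prop :=
  ∃ r u v, G.IsRoot r ∧ G.Adj r u ∧ G.mult u v = 2

/-- `B` is obtained from `B'` by inserting a new bead `(u,v)` between the root
`r` of `B'` and its child `a`.  Equivalently, `B'` is obtained from `B` by
deleting `u` and `v` and adding an edge from the root to the child of `v`. -/
def AddBeadAtRoot (B' B : DG) : Prop :=
  ∃ r a u v, B'.IsRoot r ∧ B'.Adj r a ∧ u ∉ B'.verts ∧ v ∉ B'.verts ∧ u ≠ v ∧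
    B.verts = insert u (insert v B'.verts) ∧
    B.label = (fun w => if w = u ∨ w = v then none else B'.label w) ∧
    B.mult = (fun s t =>
      if s = r ∧ t = a then 0
      else if s = r ∧ t = u then 1
      else if s = u ∧ t = v then 2
      else if s = v ∧ t = a then 1
      else if s = u ∨ s = v ∨ t = u ∨ t = v then 0
      else B'.mult s t)

/-- `N` is obtained by joining `N1` and `N2`: the two roots are identified into
a single node `u`, which becomes the child of a new root `r`.  The embeddings
`f1`, `f2` realise the copies of `N1` and `N2` inside `N`. -/
def IsJoinOf (N N1 N2 : DG) : Prop :=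
  ∃ (f1 f2 : ℕ → ℕ) (r u : ℕ),
    N.IsRoot r ∧ u ∈ N.verts ∧ N.mult r u = 1 ∧
    Set.InjOn f1 N1.verts ∧ Set.InjOn f2 N2.verts ∧
    (∀ v, N1.IsRoot v → f1 v = u) ∧ (∀ v, N2.IsRoot v → f2 v = u) ∧
    (∀ w, w ∈ N.verts ↔ (w = r ∨ (∃ v ∈ N1.verts, f1 v = w) ∨ (∃ v ∈ N2.verts, f2 v = w))) ∧
    (∀ v1 ∈ N1.verts, ∀ v2 ∈ N2.verts, f1 v1 = f2 v2 → N1.IsRoot v1 ∧ N2.IsRoot v2) ∧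
    (∀ v ∈ N1.verts, f1 v ≠ r) ∧ (∀ v ∈ N2.verts, f2 v ≠ r) ∧
    (∀ a ∈ N1.verts, ∀ b ∈ N1.verts, N.mult (f1 a) (f1 b) = N1.mult a b) ∧
    (∀ a ∈ N2.verts, ∀ b ∈ N2.verts, N.mult (f2 a) (f2 b) = N2.mult a b) ∧
    (∀ a b, N.Adj a b →
      (a = r ∧ b = u) ∨
      (∃ a' ∈ N1.verts, ∃ b' ∈ N1.verts, f1 a' = a ∧ f1 b' = b ∧ N1.Adj a' b') ∨
      (∃ a' ∈ N2.verts, ∃ b' ∈ N2.verts, f2 a' = a ∧ f2 b' = b ∧ N2.Adj a' b')) ∧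
    (∀ v ∈ N1.verts, N.label (f1 v) = N1.label v) ∧
    (∀ v ∈ N2.verts, N.label (f2 v) = N2.label v) ∧
    N.label r = none

/-- Delete a node and all incident edges. -/
def deleteNode (G : DG) (v : ℕ) : DG where
  verts := G.verts.erase v
  mult := fun a b => if a = v ∨ b = v then 0 else G.mult a b
  label := fun a => if a = v then none else G.label a

/-- Suppress an in-degree-1 out-degree-1 node `v` with parent `p` and child `c`. -/
def suppressNode (G : DG) (v p c : ℕ) : DG where
  verts := G.verts.erase v
  mult := fun a b =>
    if a = v ∨ b = v then 0
    else if a = p ∧ b = c then G.mult a b + 1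
    else G.mult a b
  label := fun a => if a = v then none else G.label a

/-- One step of the restriction procedure for label set `S`: delete a leaf
labelled in `S` or an unlabelled node of out-degree 0, or suppress an
unlabelled node of in-degree 1 and out-degree 1. -/
inductive RStep (S : Finset ℕ) : DG → DG → Prop
  | del (G : DG) (v : ℕ) : v ∈ G.verts →
      ((∃ x ∈ S, G.label v = some x) ∨ (G.label v = none ∧ G.outDeg v = 0)) →
      RStep S G (G.deleteNode v)
  | suppress (G : DG) (v p c : ℕ) : v ∈ G.verts → G.label v = none →
      G.mult p v = 1 → G.inDeg v = 1 → G.mult v c = 1 → G.outDeg v = 1 →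
      RStep S G (G.suppressNode v p c)

/-- `Restricts S G G'` : `G' = G ∖ S`, i.e. `G'` is obtained from `G` by
deleting all leaves labelled in `S` and exhaustively deleting unlabelled nodes
of out-degree 0 and suppressing in-degree-1 out-degree-1 nodes. -/
def Restricts (S : Finset ℕ) (G G' : DG) : Prop :=
  Relation.ReflTransGen (RStep S) G G' ∧ ∀ H, ¬ RStep S G' H

/-- `𝒯 ∖ S` for a set of MUL-trees (empty results discarded). -/
def SetRestrict (S : Finset ℕ) (Ts : Set DG) : Set DG :=
  {T' | T'.verts.Nonempty ∧ ∃ T ∈ Ts, Restricts S T T'}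

/-- The member of the depth-1 forest of `T` keeping `y` and discarding the
subtree rooted at `y'` (here `r` is the root, `x` its child, `y,y'` the
children of `x`, which is suppressed). -/
noncomputable def f1del (T : DG) (r x y y' : ℕ) : DG where
  verts := (T.verts.filter (fun v => ¬ T.Reaches y' v)).erase x
  mult := fun a b =>
    if a = r ∧ b = y then 1
    else if a = x ∨ b = x ∨ T.Reaches y' a ∨ T.Reaches y' b then 0
    else T.mult a b
  label := fun v => if v = x ∨ T.Reaches y' v then none else T.label v

/-- `T'` is one of the two members of the depth-1 forest `F1(T)`. -/
def InF1 (T T' : DG) : Prop :=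
  ∃ r x y y', T.IsRoot r ∧ T.Adj r x ∧ T.Adj x y ∧ T.Adj x y' ∧ y ≠ y' ∧
    T' = f1del T r x y y'

/-- `F1(𝒯)`. -/
def F1Set (Ts : Set DG) : Set DG := {T' | ∃ T ∈ Ts, InF1 T T'}

/-- Two species labels occur in the same member of `F1(𝒯)`. -/
def SplitRel (Ts : Set DG) (a b : ℕ) : Prop :=
  ∃ T' ∈ F1Set Ts, (∃ u, T'.label u = some a) ∧ (∃ v, T'.label v = some b)

/-- `S` is one of the classes of the split partition of `X` for `𝒯`. -/
def SplitPart (X : Finset ℕ) (Ts : Set DG) (S : Finset ℕ) : Prop :=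
  ∃ a ∈ X, S = X.filter (fun b => Relation.EqvGen (SplitRel Ts) a b)

end DG

/-!
Let `r` be the root of the beaded tree `B` and `c` its child, and suppose `c` is not the top of a
bead. Every edge into a node of a beaded tree carries its whole in-degree, so `c` is not a
reticulation, and it is a leaf or a tree node.

If `c` is a leaf, then `r` and `c` are the only nodes of `B`: there is a single label, and no node
of out-degree 2 for a tree node of a displayed MUL-tree to map to, so every displayed MUL-tree has
at most one leaf.

If `c` is a tree node, it has two distinct children `c₁`, `c₂`. As every node of a beaded tree has
a single parent, no leaf lies below both. For a displayed MUL-tree with root child `x`, the image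
of `x` has out-degree 2, so it is not `r`, and each subtree below a child of `x` (a member of
`F₁(𝒯)`) is mapped below `c₁` or below `c₂`. Hence "labels a leaf below `c₁`" is invariant under
the split relation; with a trivial split partition it holds for all of `X` or for none of it,
yet it holds for the labels of the leaves below `c₁` and fails for those below `c₂`.
-/

namespace DG

open Relation

section Degrees

variable {G : DG}

lemma exists_adj_of_outDeg_pos {u : ℕ} (h : 0 < G.outDeg u) : ∃ v ∈ G.verts, G.Adj u v := by
  obtain ⟨v, hv, hne⟩ := Finset.exists_ne_zero_of_sum_ne_zero h.ne'
  exact ⟨v, hv, Nat.pos_of_ne_zero hne⟩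

lemma exists_adj_of_inDeg_pos {v : ℕ} (h : 0 < G.inDeg v) : ∃ u ∈ G.verts, G.Adj u v := by
  obtain ⟨u, hu, hne⟩ := Finset.exists_ne_zero_of_sum_ne_zero h.ne'
  exact ⟨u, hu, Nat.pos_of_ne_zero hne⟩

lemma sum_mult_le_outDeg (hsup : G.Supported) (u : ℕ) (s : Finset ℕ) :
    ∑ v ∈ s, G.mult u v ≤ G.outDeg u :=
  Finset.sum_le_sum_of_ne_zero fun v _ hv => (hsup u v (Nat.pos_of_ne_zero hv)).2

lemma sum_mult_le_inDeg (hsup : G.Supported) (s : Finset ℕ) (v : ℕ) :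
    ∑ u ∈ s, G.mult u v ≤ G.inDeg v :=
  Finset.sum_le_sum_of_ne_zero fun u _ hu => (hsup u v (Nat.pos_of_ne_zero hu)).1

lemma mult_le_outDeg (hsup : G.Supported) (u v : ℕ) : G.mult u v ≤ G.outDeg u := by
  simpa using sum_mult_le_outDeg hsup u {v}

lemma mult_le_inDeg (hsup : G.Supported) (u v : ℕ) : G.mult u v ≤ G.inDeg v := by
  simpa using sum_mult_le_inDeg hsup {u} v

lemma card_le_outDeg (hsup : G.Supported) {u : ℕ} {s : Finset ℕ} (hs : ∀ v ∈ s, G.Adj u v) :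
    s.card ≤ G.outDeg u := by
  simpa using (s.card_nsmul_le_sum (G.mult u) 1 hs).trans (sum_mult_le_outDeg hsup u s)

lemma eq_of_adj_of_outDeg_eq_one (hsup : G.Supported) {u c w : ℕ} (hu : G.outDeg u = 1)
    (hc : G.Adj u c) (hw : G.Adj u w) : w = c := by
  by_contra hne
  have := card_le_outDeg hsup (u := u) (s := {w, c}) (by simp [hc, hw])
  rw [Finset.card_pair hne, hu] at this
  omega

lemma eq_or_eq_of_adj_of_outDeg_eq_two (hsup : G.Supported) {u c₁ c₂ w : ℕ}
    (hu : G.outDeg u = 2) (h₁ : G.Adj u c₁) (h₂ : G.Adj u c₂) (hne : c₁ ≠ c₂)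
    (hw : G.Adj u w) : w = c₁ ∨ w = c₂ := by
  by_contra! h
  have := card_le_outDeg hsup (u := u) (s := {w, c₁, c₂}) (by simp [h₁, h₂, hw])
  rw [Finset.card_insert_of_notMem (by simp [h.1, h.2]), Finset.card_pair hne, hu] at this
  omega

lemma exists_adj_adj_ne_of_outDeg_eq_two {u : ℕ} (hu : G.outDeg u = 2)
    (hle : ∀ v, G.mult u v ≤ 1) : ∃ c₁ c₂, G.Adj u c₁ ∧ G.Adj u c₂ ∧ c₁ ≠ c₂ := by
  obtain ⟨c₁, hc₁, h₁⟩ := exists_adj_of_outDeg_pos (G := G) (u := u) (by omega)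
  have hsum := Finset.add_sum_erase G.verts (G.mult u) hc₁
  obtain ⟨c₂, hc₂, h₂⟩ := Finset.exists_ne_zero_of_sum_ne_zero (s := G.verts.erase c₁)
    (f := G.mult u) (by unfold outDeg at hu; have := hle c₁; omega)
  exact ⟨c₁, c₂, h₁, Nat.pos_of_ne_zero h₂, (Finset.ne_of_mem_erase hc₂).symm⟩

lemma two_le_outDeg_of_arcOK (hsup : G.Supported) {e f : Arc} (he : G.ArcOK e)
    (hf : G.ArcOK f) (hsrc : e.1 = f.1) (hne : e ≠ f) : 2 ≤ G.outDeg e.1 := by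
  obtain ⟨u, v, i⟩ := e
  obtain ⟨u', v', j⟩ := f
  dsimp only [ArcOK] at he hf hsrc ⊢
  subst hsrc
  by_cases hv : v = v'
  · subst hv
    have hij : i ≠ j := by rintro rfl; exact hne rfl
    have := mult_le_outDeg hsup u v
    omega
  · have := card_le_outDeg hsup (u := u) (s := {v, v'}) (by simp [Adj]; omega)
    rwa [Finset.card_pair hv] at this

lemma eq_of_adj_of_mult_eq_inDeg (hsup : G.Supported) {u w v : ℕ}
    (hw : G.mult w v = G.inDeg v) (hu : G.Adj u v) : u = w := by
  by_contra hne
  have := sum_mult_le_inDeg hsup {u, w} v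
  rw [Finset.sum_pair hne, hw] at this
  have hpos : 0 < G.mult u v := hu
  omega

lemma ne_of_isLeafNode_of_isRoot {v r : ℕ} (hv : G.IsLeafNode v) (hr : G.IsRoot r) : v ≠ r := by
  rintro rfl
  have := hv.2.2.symm.trans hr.2.2
  omega

end Degrees

section Reachability

variable {G : DG}

lemma wellFounded_of_forall_not_transGen {α : Type*} {R : α → α → Prop} (s : Finset α)
    (hs : ∀ a b, R a b → a ∈ s) (hirr : ∀ a, ¬ TransGen R a a) : WellFounded R := by
  refine Subrelation.wf (fun {a b} hab => ?_) (measure fun v => (s.filter (TransGen R · v)).card).wf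
  show (s.filter (TransGen R · a)).card < (s.filter (TransGen R · b)).card
  refine Finset.card_lt_card ((Finset.ssubset_iff_of_subset fun w hw => ?_).2 ⟨a, ?_, ?_⟩)
  · rw [Finset.mem_filter] at hw ⊢
    exact ⟨hw.1, hw.2.tail hab⟩
  · simp [hs a b hab, TransGen.single hab]
  · simp [hirr a]

lemma wellFounded_adj (hac : G.Acyclic) (hsup : G.Supported) : WellFounded G.Adj :=
  wellFounded_of_forall_not_transGen G.verts (fun a b h => (hsup a b h).1) hac

lemma wellFounded_flip_adj (hac : G.Acyclic) (hsup : G.Supported) : WellFounded (flip G.Adj) :=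
  wellFounded_of_forall_not_transGen G.verts (fun a b h => (hsup b a h).2)
    fun a h => hac a (transGen_swap.1 h)

lemma reaches_of_inDeg_pos (hac : G.Acyclic) (hsup : G.Supported) {r : ℕ}
    (hin : ∀ v ∈ G.verts, v ≠ r → 0 < G.inDeg v) {v : ℕ} (hv : v ∈ G.verts) :
    G.Reaches r v := by
  induction v using (wellFounded_adj hac hsup).induction with
  | _ v ih =>
  by_cases hvr : v = r
  · exact hvr ▸ ReflTransGen.refl
  · obtain ⟨u, hu, huv⟩ := exists_adj_of_inDeg_pos (hin v hv hvr)
    exact (ih u huv hu).tail huv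

lemma exists_reaches_outDeg_eq_zero (hac : G.Acyclic) (hsup : G.Supported) {v : ℕ}
    (hv : v ∈ G.verts) : ∃ l ∈ G.verts, G.Reaches v l ∧ G.outDeg l = 0 := by
  induction v using (wellFounded_flip_adj hac hsup).induction with
  | _ v ih =>
  by_cases h0 : G.outDeg v = 0
  · exact ⟨v, hv, .refl, h0⟩
  · obtain ⟨w, hw, hvw⟩ := exists_adj_of_outDeg_pos (Nat.pos_of_ne_zero h0)
    obtain ⟨l, hl, hwl, hl0⟩ := ih w hvw hw
    exact ⟨l, hl, .head hvw hwl, hl0⟩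

lemma reaches_of_adj_of_outDeg_eq_one (hsup : G.Supported) {u c v : ℕ} (hu : G.outDeg u = 1)
    (hc : G.Adj u c) (h : G.Reaches u v) (hne : v ≠ u) : G.Reaches c v := by
  rcases h.cases_head with rfl | ⟨w, hw, hwv⟩
  · exact absurd rfl hne
  · exact eq_of_adj_of_outDeg_eq_one hsup hu hc hw ▸ hwv

lemma reaches_or_reaches_of_outDeg_eq_two (hsup : G.Supported) {u c₁ c₂ v : ℕ}
    (hu : G.outDeg u = 2) (h₁ : G.Adj u c₁) (h₂ : G.Adj u c₂) (hne : c₁ ≠ c₂)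
    (h : G.SReaches u v) : G.Reaches c₁ v ∨ G.Reaches c₂ v := by
  obtain ⟨w, hw, hwv⟩ := TransGen.head'_iff.1 h
  rcases eq_or_eq_of_adj_of_outDeg_eq_two hsup hu h₁ h₂ hne hw with rfl | rfl
  exacts [.inl hwv, .inr hwv]

lemma eq_or_eq_of_reaches_of_outDeg_eq_zero (hsup : G.Supported) {r c v : ℕ}
    (hr : G.outDeg r = 1) (hrc : G.Adj r c) (hc : G.outDeg c = 0) (h : G.Reaches r v) :
    v = r ∨ v = c := by
  refine or_iff_not_imp_left.2 fun hvr => ?_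
  rcases (reaches_of_adj_of_outDeg_eq_one hsup hr hrc h hvr).cases_head with rfl | ⟨w, hw, -⟩
  · rfl
  · have hpos : 0 < G.mult c w := hw
    have := mult_le_outDeg hsup c w
    omega

lemma sreaches_of_isWalk {p : List Arc} {a b : ℕ} (h : G.IsWalk p a b) : G.SReaches a b := by
  induction p generalizing a with
  | nil => exact absurd rfl h.1
  | cons e t ih =>
    obtain ⟨-, hok, hch, hhd, hlast⟩ := h
    simp only [List.head?_cons, Option.map_some, Option.some.injEq] at hhd
    subst hhd
    have hadj : G.Adj e.1 e.2.1 := Nat.lt_of_le_of_lt (Nat.zero_le _) (hok e List.mem_cons_self)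
    cases t with
    | nil =>
      simp only [List.getLast?_singleton, Option.map_some, Option.some.injEq] at hlast
      exact hlast ▸ TransGen.single hadj
    | cons f t' =>
      obtain ⟨hef, hch'⟩ := List.isChain_cons_cons.1 hch
      rw [List.getLast?_cons_cons] at hlast
      have := ih ⟨List.cons_ne_nil _ _, fun x hx => hok x (List.mem_cons_of_mem _ hx), hch', rfl,
        hlast⟩
      exact TransGen.head hadj (hef ▸ this)

lemma reaches_of_isWalk {p : List Arc} {a b : ℕ} (h : G.IsWalk p a b) : G.Reaches a b :=
  (sreaches_of_isWalk h).to_reflTransGen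

lemma two_le_outDeg_of_isWalk (hsup : G.Supported) {p p' : List Arc} {a b b' : ℕ}
    (h : G.IsWalk p a b) (h' : G.IsWalk p' a b') (hne : p.head? ≠ p'.head?) :
    2 ≤ G.outDeg a := by
  obtain ⟨e, t, rfl⟩ := List.exists_cons_of_ne_nil h.1
  obtain ⟨f, t', rfl⟩ := List.exists_cons_of_ne_nil h'.1
  have he : e.1 = a := by simpa using h.2.2.2.1
  have hf : f.1 = a := by simpa using h'.2.2.2.1
  subst he
  exact two_le_outDeg_of_arcOK hsup (h.2.1 e (by simp)) (h'.2.1 f (by simp)) hf.symm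
    (by simpa using hne)

end Reachability

section UniqueParents

variable {G : DG}

lemma reaches_or_reaches_of_reaches (hpar : ∀ u u' v, G.Adj u v → G.Adj u' v → u = u')
    {a b v : ℕ} (ha : G.Reaches a v) (hb : G.Reaches b v) : G.Reaches a b ∨ G.Reaches b a := by
  induction hb using ReflTransGen.head_induction_on with
  | refl => exact .inl ha
  | head hbc _ ih =>
    rcases ih with h | h
    · rcases h.cases_tail with rfl | ⟨p, hap, hpc⟩
      · exact .inr (ReflTransGen.single hbc)
      · exact .inl (hpar _ _ _ hpc hbc ▸ hap)
    · exact .inr (ReflTransGen.head hbc h)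

lemma not_reaches_of_adj_of_adj (hpar : ∀ u u' v, G.Adj u v → G.Adj u' v → u = u')
    (hac : G.Acyclic) {c d₁ d₂ : ℕ} (h₁ : G.Adj c d₁)
    (h₂ : G.Adj c d₂) (hne : d₁ ≠ d₂) : ¬ G.Reaches d₁ d₂ := by
  intro h
  rcases h.cases_tail with rfl | ⟨p, hp, hpd⟩
  · exact hne rfl
  · exact hac c (TransGen.head' h₁ (hpar _ _ _ hpd h₂ ▸ hp))

lemma not_reaches_of_reaches_of_adj (hpar : ∀ u u' v, G.Adj u v → G.Adj u' v → u = u')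
    (hac : G.Acyclic) {c d₁ d₂ v : ℕ} (h₁ : G.Adj c d₁)
    (h₂ : G.Adj c d₂) (hne : d₁ ≠ d₂) (hv : G.Reaches d₁ v) : ¬ G.Reaches d₂ v := fun hv' =>
  (reaches_or_reaches_of_reaches hpar hv hv').elim
    (not_reaches_of_adj_of_adj hpar hac h₁ h₂ hne)
    (not_reaches_of_adj_of_adj hpar hac h₂ h₁ hne.symm)

end UniqueParents

def HasLabelBelow (G : DG) (z a : ℕ) : Prop := ∃ v, G.label v = some a ∧ G.Reaches z v

lemma HasLabelBelow.of_reaches {G : DG} {z z' a : ℕ} (h : G.HasLabelBelow z' a)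
    (hz : G.Reaches z z') : G.HasLabelBelow z a :=
  let ⟨v, hv, hz'v⟩ := h
  ⟨v, hv, hz.trans hz'v⟩

section Network

variable {X : Finset ℕ} {N : DG}

lemma IsNetwork.reaches_of_mem (hN : IsNetwork X N) {r v : ℕ} (hr : N.IsRoot r)
    (hv : v ∈ N.verts) : N.Reaches r v := by
  obtain ⟨r', -, huniq⟩ := hN.root
  refine reaches_of_inDeg_pos hN.acyclic hN.supported (fun w hw hwr => ?_) hv
  rcases hN.nodes w hw with h | h | h | h
  · exact absurd ((huniq w h).trans (huniq r hr).symm) hwr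
  all_goals simp [h.2.1]

lemma IsNetwork.eq_of_label_eq (hN : IsNetwork X N) {v v' a : ℕ} (hv : N.label v = some a)
    (hv' : N.label v' = some a) : v = v' := by
  obtain ⟨w, -, huniq⟩ := hN.labelsOnto a (hN.labelsSub v a hv)
  exact (huniq v hv).trans (huniq v' hv').symm

lemma IsNetwork.exists_hasLabelBelow (hN : IsNetwork X N) {v : ℕ} (hv : v ∈ N.verts) :
    ∃ a ∈ X, N.HasLabelBelow v a := by
  obtain ⟨l, hl, hvl, hl0⟩ := exists_reaches_outDeg_eq_zero hN.acyclic hN.supported hv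
  have hleaf : N.IsLeafNode l := by
    rcases hN.nodes l hl with h | h | h | h
    all_goals first | exact h | simp [h.2.2] at hl0
  obtain ⟨a, ha⟩ := (hN.labels l).2 hleaf
  exact ⟨a, hN.labelsSub l a ha, l, ha, hvl⟩

/-- A node of out-degree at least 2 is not the root, hence lies below `c`. -/
lemma IsNetwork.reaches_or_reaches_of_sreaches (hN : IsNetwork X N) {r c c₁ c₂ w z : ℕ}
    (hr : N.IsRoot r) (hrc : N.Adj r c) (hc : N.outDeg c = 2) (h₁ : N.Adj c c₁)
    (h₂ : N.Adj c c₂) (hne : c₁ ≠ c₂) (hw : 2 ≤ N.outDeg w) (hwz : N.SReaches w z) :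
    N.Reaches c₁ z ∨ N.Reaches c₂ z := by
  have hsup := hN.supported
  obtain ⟨w', hww', -⟩ := TransGen.head'_iff.1 hwz
  have hwr : w ≠ r := by
    rintro rfl
    rw [hr.2.2] at hw
    omega
  have hcw := reaches_of_adj_of_outDeg_eq_one hsup hr.2.2 hrc
    (hN.reaches_of_mem hr (hsup w w' hww').1) hwr
  exact reaches_or_reaches_of_outDeg_eq_two hsup hc h₁ h₂ hne (TransGen.trans_right hcw hwz)

lemma IsBeadedTree.mult_eq_inDeg_of_adj (hB : IsBeadedTree X N) {u v : ℕ} (huv : N.Adj u v) :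
    N.mult u v = N.inDeg v := by
  have hsup := hB.1.supported
  have hpos : 0 < N.mult u v := huv
  have hle := mult_le_inDeg hsup u v
  rcases hB.1.nodes v (hsup u v huv).2 with ⟨-, h, -⟩ | ⟨-, h, -⟩ | ⟨hv, h, -⟩ | ⟨-, h, -⟩
  · omega
  · omega
  · obtain ⟨w, hw⟩ := hB.2 v hv h
    rwa [eq_of_adj_of_mult_eq_inDeg hsup (hw.trans h.symm) huv, h]
  · omega

lemma IsBeadedTree.eq_of_adj_of_adj (hB : IsBeadedTree X N) {u u' v : ℕ} (hu : N.Adj u v)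
    (hu' : N.Adj u' v) : u = u' :=
  eq_of_adj_of_mult_eq_inDeg hB.1.supported (hB.mult_eq_inDeg_of_adj hu') hu

end Network

section MulTree

variable {X : Finset ℕ} {T : DG}

lemma IsMulTree.reaches_of_mem (hT : IsMulTree X T) {r v : ℕ} (hr : T.IsRoot r)
    (hv : v ∈ T.verts) : T.Reaches r v := by
  obtain ⟨r', -, huniq⟩ := hT.root
  refine reaches_of_inDeg_pos hT.acyclic hT.supported (fun w hw hwr => ?_) hv
  rcases hT.nodes w hw with h | h | h
  · exact absurd ((huniq w h).trans (huniq r hr).symm) hwr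
  all_goals simp [h.2.1]

lemma IsMulTree.outDeg_eq_two_of_adj_of_adj (hT : IsMulTree X T) {u x y : ℕ}
    (hux : T.Adj u x) (hxy : T.Adj x y) : T.outDeg x = 2 := by
  have hpos : 0 < T.mult u x := hux
  have hpos' : 0 < T.mult x y := hxy
  have := mult_le_inDeg hT.supported u x
  have := mult_le_outDeg hT.supported x y
  rcases hT.nodes x (hT.supported u x hux).2 with ⟨-, h, -⟩ | ⟨-, -, h⟩ | ⟨-, -, h⟩
  · omega
  · exact h
  · omega

lemma IsMulTree.numLeaves_le_one (hT : IsMulTree X T) (hno : ∀ v, ¬ T.IsTreeNode v) :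
    T.numLeaves ≤ 1 := by
  obtain ⟨r, hr, huniq⟩ := hT.root
  obtain ⟨x, -, hrx⟩ := exists_adj_of_outDeg_pos (hr.2.2 ▸ one_pos : 0 < T.outDeg r)
  have hx : T.outDeg x = 0 := by
    rcases hT.nodes x (hT.supported r x hrx).2 with h | h | h
    · obtain rfl := huniq x h
      exact absurd (TransGen.single hrx) (hT.acyclic x)
    · exact absurd h (hno x)
    · exact h.2.2
  have hleaves : ∀ v ∈ T.verts.filter (fun v => (T.label v).isSome), v = x := by
    intro v hv
    rw [Finset.mem_filter, Option.isSome_iff_exists] at hv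
    exact (eq_or_eq_of_reaches_of_outDeg_eq_zero hT.supported hr.2.2 hrx hx
      (hT.reaches_of_mem hr hv.1)).resolve_left
      (ne_of_isLeafNode_of_isRoot ((hT.labels v).1 hv.2) hr)
  exact Finset.card_le_one.2 fun u hu v hv => (hleaves u hu).trans (hleaves v hv).symm

lemma IsMulTree.label_f1del (hT : IsMulTree X T) {r x y y' v a : ℕ} (hr : T.IsRoot r)
    (hrx : T.Adj r x) (hxy : T.Adj x y) (hxy' : T.Adj x y') (hne : y ≠ y')
    (hv : (f1del T r x y y').label v = some a) : T.label v = some a ∧ T.Reaches y v := by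
  simp only [f1del] at hv
  split_ifs at hv with hxv
  rw [not_or] at hxv
  refine ⟨hv, ?_⟩
  have hleaf := (hT.labels v).1 ⟨a, hv⟩
  have hrv := hT.reaches_of_mem hr hleaf.1
  have hxv' := reaches_of_adj_of_outDeg_eq_one hT.supported hr.2.2 hrx hrv
    (ne_of_isLeafNode_of_isRoot hleaf hr)
  exact (reaches_or_reaches_of_outDeg_eq_two hT.supported
    (hT.outDeg_eq_two_of_adj_of_adj hrx hxy) hxy hxy' hne
    ((reflTransGen_iff_eq_or_transGen.1 hxv').resolve_left hxv.1)).resolve_right hxv.2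

end MulTree

section Embedding

variable {T N : DG} {h : ℕ → ℕ} {hE : ℕ → ℕ → List Arc}

lemma WeakEmbedding.reaches (he : WeakEmbedding T N h hE) {u v : ℕ} (huv : T.Reaches u v) :
    N.Reaches (h u) (h v) := by
  induction huv with
  | refl => exact .refl
  | tail _ hvw ih => exact ih.trans (reaches_of_isWalk (he.2.2.1 _ _ hvw))

lemma WeakEmbedding.two_le_outDeg (he : WeakEmbedding T N h hE) (hsup : N.Supported)
    {x y y' : ℕ} (hxy : T.Adj x y) (hxy' : T.Adj x y') (hne : y ≠ y') :
    2 ≤ N.outDeg (h x) :=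
  two_le_outDeg_of_isWalk hsup (he.2.2.1 x y hxy) (he.2.2.1 x y' hxy')
    (he.2.2.2 x y y' hxy hxy' hne)

lemma IsMulTree.exists_forall_hasLabelBelow_of_inF1 {X : Finset ℕ} {T' : DG}
    (hT : IsMulTree X T) (hTT' : InF1 T T') (hsup : N.Supported) (hd : N.Displays T) :
    ∃ w z, 2 ≤ N.outDeg w ∧ N.SReaches w z ∧
      ∀ a v, T'.label v = some a → N.HasLabelBelow z a := by
  obtain ⟨r, x, y, y', hr, hrx, hxy, hxy', hne, rfl⟩ := hTT'
  obtain ⟨h, hE, he⟩ := hd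
  refine ⟨h x, h y, he.two_le_outDeg hsup hxy hxy' hne, sreaches_of_isWalk (he.2.2.1 x y hxy),
    fun a v hv => ?_⟩
  obtain ⟨hva, hyv⟩ := hT.label_f1del hr hrx hxy hxy' hne hv
  exact ⟨h v, (he.2.1 v ((hT.labels v).1 ⟨a, hva⟩)).2.trans hva, he.reaches hyv⟩

end Embedding

lemma iff_of_forall_splitPart_eq {X : Finset ℕ} {Ts : Set DG}
    (htriv : ∀ S, SplitPart X Ts S → S = X) {P : ℕ → Prop}
    (hP : ∀ a b, SplitRel Ts a b → (P a ↔ P b)) {a b : ℕ} (ha : a ∈ X) (hb : b ∈ X) :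
    P a ↔ P b := by
  have hS := htriv _ ⟨a, ha, rfl⟩
  have hab : EqvGen (SplitRel Ts) a b := by
    rw [← hS] at hb
    exact (Finset.mem_filter.1 hb).2
  have hequiv : Equivalence fun a b => P a ↔ P b := ⟨fun _ => Iff.rfl, Iff.symm, Iff.trans⟩
  exact hequiv.eqvGen_iff.1 (EqvGen.mono hP _ _ hab)

section Solution

variable {X : Finset ℕ} {Ts : Set DG} {B : DG}

lemma Solution.not_isLeafNode_of_adj_root (hT : ∀ T ∈ Ts, IsMulTree X T)
    (hbig : 1 < X.card ∨ ∃ T ∈ Ts, 1 < T.numLeaves) (hB : Solution X Ts B) {r c : ℕ}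
    (hr : B.IsRoot r) (hrc : B.Adj r c) : ¬ B.IsLeafNode c := by
  intro hc
  obtain ⟨⟨hN, -⟩, hdisp⟩ := hB
  have hsup := hN.supported
  have hverts : ∀ v ∈ B.verts, v = r ∨ v = c := fun v hv =>
    eq_or_eq_of_reaches_of_outDeg_eq_zero hsup hr.2.2 hrc hc.2.2 (hN.reaches_of_mem hr hv)
  rcases hbig with hX | ⟨T, hTs, hT2⟩
  · obtain ⟨a, ha, b, hb, hab⟩ := Finset.one_lt_card.1 hX
    obtain ⟨u, hu, -⟩ := hN.labelsOnto a ha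
    obtain ⟨v, hv, -⟩ := hN.labelsOnto b hb
    have hlabelled : ∀ w a, B.label w = some a → w = c := fun w a hw =>
      have hleaf := (hN.labels w).1 ⟨a, hw⟩
      (hverts w hleaf.1).resolve_left (ne_of_isLeafNode_of_isRoot hleaf hr)
    rw [hlabelled u a hu] at hu
    rw [hlabelled v b hv, hu] at hv
    exact hab (Option.some.inj hv)
  · refine absurd hT2 (not_lt.2 ((hT T hTs).numLeaves_le_one fun x hx => ?_))
    obtain ⟨h, hE, he⟩ := hdisp T hTs
    obtain ⟨y, y', hxy, hxy', hne⟩ :=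
      exists_adj_adj_ne_of_outDeg_eq_two hx.2.2 ((hT T hTs).simple x)
    have h2 := he.two_le_outDeg hsup hxy hxy' hne
    rcases hverts (h x) (he.1 x hx.1) with hx' | hx' <;> rw [hx'] at h2
    · rw [hr.2.2] at h2; omega
    · rw [hc.2.2] at h2; omega

lemma Solution.not_isTreeNode_of_adj_root (hT : ∀ T ∈ Ts, IsMulTree X T)
    (htriv : ∀ S, SplitPart X Ts S → S = X) (hB : Solution X Ts B) {r c : ℕ}
    (hr : B.IsRoot r) (hrc : B.Adj r c) (hnb : ∀ v, B.mult c v ≠ 2) : ¬ B.IsTreeNode c := by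
  intro hc
  obtain ⟨hBT, hdisp⟩ := hB
  have hN := hBT.1
  have hsup := hN.supported
  obtain ⟨c₁, c₂, h₁, h₂, hne⟩ := exists_adj_adj_ne_of_outDeg_eq_two hc.2.2 fun v => by
    have := mult_le_outDeg hsup c v
    have := hnb v
    have := hc.2.2
    omega
  have hside : ∀ T' ∈ F1Set Ts, (∀ a v, T'.label v = some a → B.HasLabelBelow c₁ a) ∨
      (∀ a v, T'.label v = some a → B.HasLabelBelow c₂ a) := by
    rintro T' ⟨T, hTs, hTT'⟩
    obtain ⟨w, z, hw, hwz, hz⟩ :=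
      (hT T hTs).exists_forall_hasLabelBelow_of_inF1 hTT' hsup (hdisp T hTs)
    rcases hN.reaches_or_reaches_of_sreaches hr hrc hc.2.2 h₁ h₂ hne hw hwz with h | h
    exacts [.inl fun a v hv => (hz a v hv).of_reaches h,
      .inr fun a v hv => (hz a v hv).of_reaches h]
  have hdisj : ∀ a, B.HasLabelBelow c₁ a → ¬ B.HasLabelBelow c₂ a := by
    rintro a ⟨v, hv, hc₁v⟩ ⟨v', hv', hc₂v'⟩
    rw [hN.eq_of_label_eq hv' hv] at hc₂v'
    exact not_reaches_of_reaches_of_adj (fun _ _ _ => hBT.eq_of_adj_of_adj) hN.acyclic h₁ h₂ hne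
      hc₁v hc₂v'
  have hinv : ∀ a b, SplitRel Ts a b → (B.HasLabelBelow c₁ a ↔ B.HasLabelBelow c₁ b) := by
    rintro a b ⟨T', hT', ⟨u, hu⟩, ⟨v, hv⟩⟩
    rcases hside T' hT' with h | h
    · exact iff_of_true (h a u hu) (h b v hv)
    · exact iff_of_false (hdisj a · (h a u hu)) (hdisj b · (h b v hv))
  obtain ⟨a₁, ha₁, hc₁a₁⟩ := hN.exists_hasLabelBelow (hsup c c₁ h₁).2
  obtain ⟨a₂, ha₂, hc₂a₂⟩ := hN.exists_hasLabelBelow (hsup c c₂ h₂).2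
  exact hdisj a₂ ((iff_of_forall_splitPart_eq htriv hinv ha₁ ha₂).1 hc₁a₁) hc₂a₂

end Solution

end DG

/-- if the split partition of `𝒯` is trivial and `|X| > 1` or
some tree of `𝒯` has more than one leaf, then every beaded tree on `X` weakly
displaying every MUL-tree in `𝒯` has a bead at the root. -/
theorem trivial_split_partition_bead_at_root (X : Finset ℕ) (Ts : Set DG)
    (hT : ∀ T ∈ Ts, DG.IsMulTree X T)
    (htriv : ∀ S : Finset ℕ, DG.SplitPart X Ts S → S = X)
    (hbig : 1 < X.card ∨ ∃ T ∈ Ts, 1 < DG.numLeaves T)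
    (B : DG) (hB : DG.Solution X Ts B) :
    B.HasBeadAtRoot := by
  have hN := hB.1.1
  obtain ⟨r, hr, -⟩ := hN.root
  obtain ⟨c, hc, hrc⟩ := DG.exists_adj_of_outDeg_pos (hr.2.2 ▸ one_pos : 0 < B.outDeg r)
  by_contra hnb
  have hcr := hB.1.mult_eq_inDeg_of_adj hrc
  have hpos : 0 < B.mult r c := hrc
  have hle : B.mult r c ≤ 1 := hr.2.2 ▸ DG.mult_le_outDeg hN.supported r c
  rcases hN.nodes c hc with hcroot | hctree | hcretic | hcleaf
  · rw [hcroot.2.1] at hcr; omega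
  · exact hB.not_isTreeNode_of_adj_root hT htriv hr hrc
      (fun v hv => hnb ⟨r, c, v, hr, hrc, hv⟩) hctree
  · rw [hcretic.2.1] at hcr; omega
  · exact hB.not_isLeafNode_of_adj_root hT hbig hr hrc hcleaf
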